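/- arXiv:1310.7636 — 2 statements merged into one kernel-verified Lean document; each statement's English description precedes it below -/
import Mathlib

section
/- Let X be a reflexive Banach space, K ⊆ X, A : K → X* and a : K → X with a(K) weakly compact and convex. Suppose A is monotone relative to a, i.e., ⟨A(x) − A(y), a(x) − a(y)⟩ ≥ 0 for all x, y ∈ K. Suppose further that for every finite-dimensional subset L ⊆ a(K) and every sequence (xₙ) ⊆ K with a(xₙ) ∈ L for all n, convergence of (a(xₙ)) to a(x) ∈ a(K) implies weak convergence of (A(xₙ)) to A(x). Then there exists x ∈ K with ⟨A(x), a(y) − a(x)⟩ ≥ 0 for all y ∈ K. -/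
/-!
The proof passes through Minty's formulation `⟨A(z), a(z) − a(x₀)⟩ ≥ 0 for all z ∈ K`.
For finitely many points `zᵢ ∈ K`, relative monotonicity makes the matrix
`Mᵢⱼ = ⟨A(zᵢ), a(zᵢ) − a(zⱼ)⟩` satisfy `Mᵢⱼ + Mⱼᵢ ≥ 0`, so by the minimax theorem some
probability vector `l` has `M l ≥ 0`; the convex combination `∑ lⱼ a(zⱼ)` solves the Minty
inequalities for those points. The Minty constraints are weakly closed, so weak compactness of
`a(K)` gives a common solution `a(x₀)`. Testing it at points of `K` whose images approach `a(x₀)`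
along the segment towards `a(y)` and using the continuity of `A` on that segment yields the
Stampacchia inequality.
-/

open Filter Topology NormedSpace

/-- Weak convergence of a sequence: tested against all continuous linear functionals. -/
def WeakConv {X : Type*} [NormedAddCommGroup X] [NormedSpace ℝ X] (u : ℕ → X) (x : X) : Prop :=
  ∀ φ : X →L[ℝ] ℝ, Filter.Tendsto (fun n => φ (u n)) Filter.atTop (nhds (φ x))

/-- A set is weakly compact: its copy in the weak space is compact. -/
def WeaklyCompact {X : Type*} [NormedAddCommGroup X] [NormedSpace ℝ X] (S : Set X) : Prop :=
  IsCompact (_root_.toWeakSpaceCLM ℝ X '' S)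

section

open Matrix

theorem Matrix.dotProduct_mulVec_self_nonneg {ι : Type*} [Fintype ι] (M : Matrix ι ι ℝ)
    (hM : ∀ i j, 0 ≤ M i j + M j i) {l : ι → ℝ} (hl : 0 ≤ l) : 0 ≤ l ⬝ᵥ M *ᵥ l := by
  have hsymm : l ⬝ᵥ Mᵀ *ᵥ l = l ⬝ᵥ M *ᵥ l := by
    rw [dotProduct_mulVec, vecMul_transpose, dotProduct_comm]
  have hsum : 0 ≤ l ⬝ᵥ (M + Mᵀ) *ᵥ l :=
    Finset.sum_nonneg fun i _ => mul_nonneg (hl i) <| Finset.sum_nonneg fun j _ =>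
      mul_nonneg (hM i j) (hl j)
  rw [add_mulVec, dotProduct_add, hsymm] at hsum
  linarith

theorem Matrix.exists_mem_stdSimplex_mulVec_nonneg {ι : Type*} [Fintype ι] [DecidableEq ι]
    [Nonempty ι] (M : Matrix ι ι ℝ) (hM : ∀ i j, 0 ≤ M i j + M j i) :
    ∃ l ∈ stdSimplex ℝ ι, 0 ≤ M *ᵥ l := by
  set B : (ι → ℝ) →ₗ[ℝ] (ι → ℝ) →ₗ[ℝ] ℝ := toLinearMap₂' ℝ M
  have hS := convex_stdSimplex ℝ ι
  have hne : (stdSimplex ℝ ι).Nonempty := ⟨_, single_mem_stdSimplex ℝ (Classical.arbitrary ι)⟩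
  obtain ⟨m, hm, l, hl, hsaddle⟩ := Sion.exists_isSaddlePointOn (f := fun m l => B m l)
    hne hS (isCompact_stdSimplex ℝ ι)
    (fun l _ =>
      (B.flip l).continuous_of_finiteDimensional.lowerSemicontinuous.lowerSemicontinuousOn _)
    (fun l _ => ((B.flip l).convexOn hS).quasiconvexOn)
    hS hne (isCompact_stdSimplex ℝ ι)
    (fun m _ => (B m).continuous_of_finiteDimensional.upperSemicontinuous.upperSemicontinuousOn _)
    (fun m _ => ((B m).concaveOn hS).quasiconcaveOn)
  refine ⟨l, hl, fun i => ?_⟩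
  -- the saddle point gives `m ⬝ᵥ M *ᵥ m ≤ eᵢ ⬝ᵥ M *ᵥ l`
  have hml := hsaddle _ (single_mem_stdSimplex ℝ i) m hm
  simp only [B, toLinearMap₂'_apply', single_dotProduct, one_mul] at hml
  exact (M.dotProduct_mulVec_self_nonneg hM hm.1).trans hml

theorem exists_mem_convexHull_forall_apply_le {E ι : Type*} [AddCommGroup E] [Module ℝ E]
    [Fintype ι] [Nonempty ι] (p : ι → E) (φ : ι → Module.Dual ℝ E)
    (hφ : ∀ i j, 0 ≤ (φ i - φ j) (p i - p j)) :
    ∃ c ∈ convexHull ℝ (Set.range p), ∀ i, φ i c ≤ φ i (p i) := by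
  classical
  obtain ⟨l, hl, hMl⟩ := exists_mem_stdSimplex_mulVec_nonneg (fun i j => φ i (p i - p j))
    fun i j => by
      have := hφ i j
      simp only [LinearMap.sub_apply, map_sub] at this ⊢
      linarith
  set c := ∑ j, l j • p j
  refine ⟨c, (convex_convexHull ℝ _).sum_mem (fun j _ => hl.1 j) hl.2
    fun j _ => subset_convexHull ℝ _ ⟨j, rfl⟩, fun i => sub_nonneg.1 ?_⟩
  have hexpand : ((fun i j => φ i (p i - p j)) *ᵥ l) i = φ i (p i) - φ i c := by
    simp only [c, mulVec, dotProduct, map_sub, map_sum, map_smul, smul_eq_mul, sub_mul,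
      Finset.sum_sub_distrib, ← Finset.mul_sum, hl.2, mul_one, mul_comm (l _)]
  exact hexpand ▸ hMl i

end

theorem WeaklyCompact.exists_forall_apply_le {X ι : Type*} [NormedAddCommGroup X]
    [NormedSpace ℝ X] {S : Set X} (hS : WeaklyCompact S) (φ : ι → StrongDual ℝ X) (r : ι → ℝ)
    (h : ∀ t : Finset ι, ∃ x ∈ S, ∀ i ∈ t, φ i x ≤ r i) : ∃ x ∈ S, ∀ i, φ i x ≤ r i := by
  have hclosed : ∀ i, IsClosed {w : WeakSpace ℝ X | (topDualPairing ℝ X).flip w (φ i) ≤ r i} :=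
    fun i => isClosed_le (WeakBilin.eval_continuous _ _) continuous_const
  obtain ⟨w, ⟨x, hx, rfl⟩, hw⟩ := hS.inter_iInter_nonempty _ hclosed fun t => by
    obtain ⟨x, hx, hxt⟩ := h t
    exact ⟨toWeakSpaceCLM ℝ X x, ⟨x, hx, rfl⟩, Set.mem_iInter₂.2 hxt⟩
  exact ⟨x, hx, Set.mem_iInter.1 hw⟩

section

variable {X : Type*} [NormedAddCommGroup X] [NormedSpace ℝ X]

def IsMintySolution (K : Set X) (A : X → StrongDual ℝ X) (a : X → X) (x₀ : X) : Prop :=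
  ∀ z ∈ K, 0 ≤ A z (a z - a x₀)

def SeqWeakContinuousOnFinDim (K : Set X) (A : X → StrongDual ℝ X) (a : X → X) : Prop :=
  ∀ (L : Set X), L ⊆ a '' K →
    (∃ M : Submodule ℝ X, FiniteDimensional ℝ M ∧ L ⊆ (M : Set X)) →
    ∀ (u : ℕ → X) (x : X), (∀ n, u n ∈ K) → x ∈ K → (∀ n, a (u n) ∈ L) →
      Tendsto (fun n => a (u n)) atTop (𝓝 (a x)) → WeakConv (fun n => A (u n)) (A x)

theorem exists_isMintySolution {K : Set X} (hne : K.Nonempty) {A : X → StrongDual ℝ X}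
    {a : X → X} (hcomp : WeaklyCompact (a '' K)) (hconv : Convex ℝ (a '' K))
    (hmono : ∀ x ∈ K, ∀ y ∈ K, 0 ≤ (A x - A y) (a x - a y)) :
    ∃ x₀ ∈ K, IsMintySolution K A a x₀ := by
  obtain ⟨_, ⟨x₀, hx₀, rfl⟩, hx₀K⟩ :=
    hcomp.exists_forall_apply_le (fun z : K => A z) (fun z => A z (a z)) fun t => by
      rcases t.eq_empty_or_nonempty with rfl | ht
      · obtain ⟨x, hx⟩ := hne
        exact ⟨a x, ⟨x, hx, rfl⟩, by simp⟩
      have : Nonempty t := ht.coe_sort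
      obtain ⟨c, hc, hcle⟩ := exists_mem_convexHull_forall_apply_le (fun z : t => a z)
        (fun z => (A z : X →ₗ[ℝ] ℝ)) fun i j => hmono _ i.1.2 _ j.1.2
      refine ⟨c, convexHull_min ?_ hconv hc, fun z hz => hcle ⟨z, hz⟩⟩
      rintro _ ⟨z, rfl⟩
      exact ⟨z, z.1.2, rfl⟩
  exact ⟨x₀, hx₀, fun z hz => by simpa [map_sub] using hx₀K ⟨z, hz⟩⟩

theorem IsMintySolution.forall_nonneg_apply_sub {K : Set X} {A : X → StrongDual ℝ X}
    {a : X → X} {x₀ : X} (hconv : Convex ℝ (a '' K)) (hA : SeqWeakContinuousOnFinDim K A a)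
    (hx₀ : x₀ ∈ K) (h : IsMintySolution K A a x₀) : ∀ y ∈ K, 0 ≤ A x₀ (a y - a x₀) := by
  intro y hy
  set v := a y - a x₀
  set L := segment ℝ (a x₀) (a y)
  have hLK : L ⊆ a '' K := hconv.segment_subset ⟨x₀, hx₀, rfl⟩ ⟨y, hy, rfl⟩
  have hLfin : ∃ M : Submodule ℝ X, FiniteDimensional ℝ M ∧ L ⊆ (M : Set X) :=
    ⟨_, FiniteDimensional.span_of_finite ℝ (Set.toFinite {a x₀, a y}),
      (Submodule.span ℝ _).convex.segment_subset (Submodule.subset_span (by simp))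
        (Submodule.subset_span (by simp))⟩
  have hmemL (n : ℕ) : a x₀ + (1 / (n + 1) : ℝ) • v ∈ L := by
    rw [show L = _ from segment_eq_image' ℝ (a x₀) (a y)]
    exact ⟨_, ⟨by positivity, div_le_one_of_le₀ (by simp) (by positivity)⟩, rfl⟩
  choose u huK hau using fun n => hLK (hmemL n)
  have htend : Tendsto (fun n => a (u n)) atTop (𝓝 (a x₀)) := by
    simp_rw [hau]
    simpa only [zero_smul, add_zero] using
      ((tendsto_one_div_add_atTop_nhds_zero_nat (𝕜 := ℝ)).smul_const v).const_add (a x₀)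
  have hnonneg (n : ℕ) : 0 ≤ A (u n) v := by
    have := h (u n) (huK n)
    rw [hau n, add_sub_cancel_left, map_smul, smul_eq_mul] at this
    exact nonneg_of_mul_nonneg_right this (by positivity)
  exact ge_of_tendsto' (hA L hLK hLfin u x₀ huK hx₀ (fun n => hau n ▸ hmemL n) htend
    (inclusionInDoubleDual ℝ X v)) hnonneg

end

theorem stmt4_general {X : Type*} [NormedAddCommGroup X] [NormedSpace ℝ X]
    (K : Set X) (hne : K.Nonempty) (A : X → StrongDual ℝ X) (a : X → X)
    (hcomp : WeaklyCompact (a '' K)) (hconv : Convex ℝ (a '' K))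
    (hmono : ∀ x ∈ K, ∀ y ∈ K, 0 ≤ (A x - A y) (a x - a y))
    (hseq : ∀ (L : Set X), L ⊆ a '' K →
      (∃ M : Submodule ℝ X, FiniteDimensional ℝ M ∧ L ⊆ (M : Set X)) →
      ∀ (u : ℕ → X) (x : X), (∀ n, u n ∈ K) → x ∈ K → (∀ n, a (u n) ∈ L) →
        Filter.Tendsto (fun n => a (u n)) Filter.atTop (nhds (a x)) →
        WeakConv (fun n => A (u n)) (A x)) :
    ∃ x ∈ K, ∀ y ∈ K, 0 ≤ A x (a y - a x) := by
  obtain ⟨x₀, hx₀, hminty⟩ := exists_isMintySolution hne hcomp hconv hmono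
  exact ⟨x₀, hx₀, hminty.forall_nonneg_apply_sub hconv hseq hx₀⟩

theorem stmt4 {X : Type*} [NormedAddCommGroup X] [NormedSpace ℝ X] [CompleteSpace X]
    (hrefl : Function.Surjective (NormedSpace.inclusionInDoubleDual ℝ X))
    (K : Set X) (hne : K.Nonempty) (A : X → StrongDual ℝ X) (a : X → X)
    (hcomp : WeaklyCompact (a '' K)) (hconv : Convex ℝ (a '' K))
    (hmono : ∀ x ∈ K, ∀ y ∈ K, 0 ≤ (A x - A y) (a x - a y))
    (hseq : ∀ (L : Set X), L ⊆ a '' K →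
      (∃ M : Submodule ℝ X, FiniteDimensional ℝ M ∧ L ⊆ (M : Set X)) →
      ∀ (u : ℕ → X) (x : X), (∀ n, u n ∈ K) → x ∈ K → (∀ n, a (u n) ∈ L) →
        Filter.Tendsto (fun n => a (u n)) Filter.atTop (nhds (a x)) →
        WeakConv (fun n => A (u n)) (A x)) :
    ∃ x ∈ K, ∀ y ∈ K, 0 ≤ A x (a y - a x) :=
  stmt4_general K hne A a hcomp hconv hmono hseq
end

section
/- Let H be a real Hilbert space, K ⊆ H, and f, g : K → H with ‖g(x) − g(y)‖² ≥ ⟨f(x) − f(y), g(x) − g(y)⟩ for all x, y ∈ K, f(K) ⊆ g(K), and g(K) weakly compact and convex. Suppose that for every finite-dimensional subset L ⊆ g(K) and every sequence (xₙ) ⊆ K with g(xₙ) ∈ L for all n, convergence of (g(xₙ)) to g(x) ∈ g(K) implies weak convergence of (f(xₙ)) to f(x). Then f and g have a coincidence point. -/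
/-!
Everything is transported to `C = g '' K`: choosing `r w ∈ K` with `g (r w) = w`, the hypothesis
on `f, g` says exactly that `A w = w - f (r w)` is monotone on `C`. Monotonicity makes the matrix
`⟪A wᵢ, wᵢ - wⱼ⟫` of finitely many points have a nonnegative symmetric part, so von Neumann's
minimax theorem on the simplex yields a point `z` of their convex hull with `⟪A wᵢ, wᵢ - z⟫ ≥ 0`;
weak compactness of `C` (finite intersection property) then gives a Minty point `z ∈ C` with
`⟪A w, w - z⟫ ≥ 0` for all `w ∈ C`. Testing this along the segment from `z` to `q = f (r z)`, on
which the sequential hypothesis makes `A` weakly continuous, gives `⟪z - q, q - z⟫ ≥ 0`, so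
`f (r z) = z = g (r z)`.
-/

open Filter Topology RealInnerProductSpace

open Matrix AffineMap

namespace Matrix

variable {ι : Type*} [Fintype ι]

theorem exists_isSaddlePointOn_stdSimplex {κ : Type*} [Fintype κ] [Nonempty ι] [Nonempty κ]
    (B : Matrix ι κ ℝ) :
    ∃ a ∈ stdSimplex ℝ ι, ∃ b ∈ stdSimplex ℝ κ,
      IsSaddlePointOn (stdSimplex ℝ ι) (stdSimplex ℝ κ) (fun x y => x ⬝ᵥ B *ᵥ y) a b :=
  Sion.exists_isSaddlePointOn (isPathConnected_stdSimplex ι).nonempty (convex_stdSimplex ℝ ι)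
    (isCompact_stdSimplex ℝ ι)
    (fun _ _ => (continuous_id.dotProduct continuous_const).continuousOn.lowerSemicontinuousOn)
    (fun y _ => (LinearMap.convexOn ((dotProductBilin ℝ ℝ).flip (B *ᵥ y))
      (convex_stdSimplex ℝ ι)).quasiconvexOn)
    (convex_stdSimplex ℝ κ) (isPathConnected_stdSimplex κ).nonempty (isCompact_stdSimplex ℝ κ)
    (fun _ _ => (continuous_const.dotProduct
      (continuous_const.matrix_mulVec continuous_id)).continuousOn.upperSemicontinuousOn)
    (fun x _ => (LinearMap.concaveOn ((dotProductBilin ℝ ℝ x).comp B.mulVecLin)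
      (convex_stdSimplex ℝ κ)).quasiconcaveOn)

theorem dotProduct_mulVec_self_nonneg_s13 {B : Matrix ι ι ℝ} (hB : ∀ i j, 0 ≤ B i j + B j i)
    {a : ι → ℝ} (ha : 0 ≤ a) : 0 ≤ a ⬝ᵥ B *ᵥ a := by
  have hexpand : a ⬝ᵥ B *ᵥ a = ∑ i, ∑ j, a i * B i j * a j := by
    simp only [dotProduct, mulVec, Finset.mul_sum, mul_assoc]
  have hswap : ∑ i, ∑ j, a i * B i j * a j = ∑ i, ∑ j, a i * B j i * a j := by
    rw [Finset.sum_comm]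
    refine Finset.sum_congr rfl fun i _ => Finset.sum_congr rfl fun j _ => ?_
    ring
  have hsymm : 0 ≤ ∑ i, ∑ j, a i * (B i j + B j i) * a j :=
    Finset.sum_nonneg fun i _ => Finset.sum_nonneg fun j _ =>
      mul_nonneg (mul_nonneg (ha i) (hB i j)) (ha j)
  simp only [mul_add, add_mul, Finset.sum_add_distrib] at hsymm
  linarith

theorem exists_mem_stdSimplex_forall_nonneg_mulVec [Nonempty ι] {B : Matrix ι ι ℝ}
    (hB : ∀ i j, 0 ≤ B i j + B j i) : ∃ b ∈ stdSimplex ℝ ι, ∀ i, 0 ≤ (B *ᵥ b) i := by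
  classical
  obtain ⟨a, ha, b, hb, hab⟩ := B.exists_isSaddlePointOn_stdSimplex
  refine ⟨b, hb, fun i => ?_⟩
  calc 0 ≤ a ⬝ᵥ B *ᵥ a := dotProduct_mulVec_self_nonneg_s13 hB ha.1
    _ ≤ Pi.single i 1 ⬝ᵥ B *ᵥ b := hab _ (single_mem_stdSimplex ℝ i) a ha
    _ = (B *ᵥ b) i := by rw [single_dotProduct, one_mul]

end Matrix

section Minty

variable {H : Type*} [NormedAddCommGroup H] [InnerProductSpace ℝ H] {C : Set H} {A : H → H}

theorem exists_forall_inner_sub_nonneg_of_fintype {ι : Type*} [Fintype ι] (hC : Convex ℝ C)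
    (hCne : C.Nonempty) (hA : ∀ x ∈ C, ∀ y ∈ C, 0 ≤ ⟪A x - A y, x - y⟫) {w : ι → H}
    (hw : ∀ i, w i ∈ C) : ∃ z ∈ C, ∀ i, 0 ≤ ⟪A (w i), w i - z⟫ := by
  cases isEmpty_or_nonempty ι with
  | inl _ => exact ⟨_, hCne.some_mem, isEmptyElim⟩
  | inr _ =>
  let B : Matrix ι ι ℝ := .of fun i j => ⟪A (w i), w i - w j⟫
  have hB : ∀ i j, 0 ≤ B i j + B j i := fun i j => by
    convert hA _ (hw i) _ (hw j) using 1
    simp only [B, of_apply, inner_sub_left, inner_sub_right]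
    ring
  obtain ⟨b, hb, hBb⟩ := exists_mem_stdSimplex_forall_nonneg_mulVec hB
  refine ⟨∑ j, b j • w j, hC.sum_mem (fun j _ => hb.1 j) hb.2 fun j _ => hw j, fun i => ?_⟩
  have hcomb : w i - ∑ j, b j • w j = ∑ j, b j • (w i - w j) := by
    simp only [smul_sub, Finset.sum_sub_distrib, ← Finset.sum_smul, hb.2, one_smul]
  simpa only [hcomb, inner_sum, real_inner_smul_right, mulVec, dotProduct, B, of_apply,
    mul_comm] using hBb i

theorem WeaklyCompact.exists_forall_inner_sub_nonneg (hCc : WeaklyCompact C) (hC : Convex ℝ C)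
    (hCne : C.Nonempty) (hA : ∀ x ∈ C, ∀ y ∈ C, 0 ≤ ⟪A x - A y, x - y⟫) :
    ∃ z ∈ C, ∀ w ∈ C, 0 ≤ ⟪A w, w - z⟫ := by
  let T (w : C) : Set (WeakSpace ℝ H) :=
    {ζ | ⟪A w, (toWeakSpace ℝ H).symm ζ⟫ ≤ ⟪A w, w⟫}
  have hT (w : C) : IsClosed (T w) :=
    isClosed_le (WeakBilin.eval_continuous _ (innerSL ℝ (A w))) continuous_const
  have hTmem {z : H} {w : C} : toWeakSpace ℝ H z ∈ T w ↔ 0 ≤ ⟪A w, w - z⟫ := by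
    simp [T, inner_sub_right]
  obtain ⟨_, ⟨z, hz, rfl⟩, hzT⟩ := hCc.inter_iInter_nonempty T hT fun u => by
    obtain ⟨z, hz, hzu⟩ := exists_forall_inner_sub_nonneg_of_fintype hC hCne hA
      (w := fun i : u => (i : C).1) fun i => i.1.2
    exact ⟨_, ⟨z, hz, rfl⟩, Set.mem_iInter₂.2 fun w hw => hTmem.2 (hzu ⟨w, hw⟩)⟩
  exact ⟨z, hz, fun w hw => hTmem.1 (Set.mem_iInter.1 hzT ⟨w, hw⟩)⟩

theorem inner_nonneg_of_forall_inner_sub_nonneg (hC : Convex ℝ C) {z q : H} (hz : z ∈ C)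
    (hq : q ∈ C) (hminty : ∀ w ∈ C, 0 ≤ ⟪A w, w - z⟫) {t : ℕ → ℝ} (ht : ∀ n, t n ∈ Set.Ioc 0 1)
    (hlim : Tendsto (fun n => ⟪A (lineMap z q (t n)), q - z⟫) atTop (𝓝 ⟪A z, q - z⟫)) :
    0 ≤ ⟪A z, q - z⟫ :=
  ge_of_tendsto' hlim fun n => by
    have h := hminty _ (hC.lineMap_mem hz hq (Set.Ioc_subset_Icc_self (ht n)))
    rw [lineMap_apply_module', add_sub_cancel_right, real_inner_smul_right] at h
    exact nonneg_of_mul_nonneg_right h (ht n).1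

theorem tendsto_inner_sub_of_tendsto_of_weakConv {u v : ℕ → H} {x y : H}
    (hu : Tendsto u atTop (𝓝 x)) (hv : WeakConv v y) (c : H) :
    Tendsto (fun n => ⟪u n - v n, c⟫) atTop (𝓝 ⟪x - y, c⟫) := by
  simp only [inner_sub_left]
  refine (hu.inner tendsto_const_nhds).sub ?_
  simpa only [innerSL_apply_apply, real_inner_comm c] using hv (innerSL ℝ c)

theorem eq_of_forall_inner_sub_nonneg (hC : Convex ℝ C) {F : H → H} {z : H} (hz : z ∈ C)
    (hFz : F z ∈ C) (hminty : ∀ w ∈ C, 0 ≤ ⟪w - F w, w - z⟫) {t : ℕ → ℝ}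
    (ht : ∀ n, t n ∈ Set.Ioc 0 1) (hw : Tendsto (fun n => lineMap z (F z) (t n)) atTop (𝓝 z))
    (hF : WeakConv (fun n => F (lineMap z (F z) (t n))) (F z)) : F z = z := by
  have h := inner_nonneg_of_forall_inner_sub_nonneg (A := fun w => w - F w) hC hz hFz hminty ht
    (tendsto_inner_sub_of_tendsto_of_weakConv hw hF _)
  rw [← neg_sub z, inner_neg_right, real_inner_self_eq_norm_sq, neg_nonneg] at h
  simpa [sub_eq_zero, eq_comm] using h

end Minty

theorem exists_finiteDimensional_segment_subset {E : Type*} [AddCommGroup E] [Module ℝ E]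
    (x y : E) : ∃ M : Submodule ℝ E, FiniteDimensional ℝ M ∧ segment ℝ x y ⊆ M :=
  ⟨Submodule.span ℝ {x, y}, FiniteDimensional.span_of_finite ℝ (Set.toFinite _),
    (Submodule.span ℝ {x, y}).convex.segment_subset (Submodule.subset_span (by simp))
      (Submodule.subset_span (by simp))⟩

theorem stmt13_general {H : Type*} [NormedAddCommGroup H] [InnerProductSpace ℝ H]
    (K : Set H) (hne : K.Nonempty) (f g : H → H)
    (hmono : ∀ x ∈ K, ∀ y ∈ K, ⟪f x - f y, g x - g y⟫ ≤ ‖g x - g y‖ ^ 2)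
    (hfg : f '' K ⊆ g '' K)
    (hcomp : WeaklyCompact (g '' K)) (hconv : Convex ℝ (g '' K))
    (hseq : ∀ (L : Set H), L ⊆ g '' K →
      (∃ M : Submodule ℝ H, FiniteDimensional ℝ M ∧ L ⊆ (M : Set H)) →
      ∀ (u : ℕ → H) (x : H), (∀ n, u n ∈ K) → x ∈ K → (∀ n, g (u n) ∈ L) →
        Filter.Tendsto (fun n => g (u n)) Filter.atTop (nhds (g x)) →
        WeakConv (fun n => f (u n)) (f x)) :
    ∃ x ∈ K, f x = g x := by
  set C := g '' K
  let r := Function.invFunOn g K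
  have hr {w : H} (hw : w ∈ C) : r w ∈ K ∧ g (r w) = w := Function.invFunOn_pos hw
  have hA : ∀ x ∈ C, ∀ y ∈ C, 0 ≤ ⟪(x - f (r x)) - (y - f (r y)), x - y⟫ := fun x hx y hy => by
    have h := hmono _ (hr hx).1 _ (hr hy).1
    rw [(hr hx).2, (hr hy).2] at h
    rw [sub_sub_sub_comm, inner_sub_left, real_inner_self_eq_norm_sq]
    linarith
  obtain ⟨z, hzC, hz⟩ := hcomp.exists_forall_inner_sub_nonneg hconv (hne.image g) hA
  obtain ⟨hxK, hgx⟩ := hr hzC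
  have hqC : f (r z) ∈ C := hfg (Set.mem_image_of_mem f hxK)
  let t (n : ℕ) : ℝ := 1 / (n + 1)
  have ht n : t n ∈ Set.Ioc 0 1 :=
    ⟨Nat.one_div_pos_of_nat, div_le_one_of_le₀ (by simp) (by positivity)⟩
  have hwL n : lineMap z (f (r z)) (t n) ∈ segment ℝ z (f (r z)) :=
    segment_eq_image_lineMap ℝ z _ ▸ ⟨t n, Set.Ioc_subset_Icc_self (ht n), rfl⟩
  have hwC n := hconv.segment_subset hzC hqC (hwL n)
  have hwz : Tendsto (fun n => lineMap z (f (r z)) (t n)) atTop (𝓝 z) := by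
    simpa only [lineMap_apply_zero] using (tendsto_const_nhds (x := z)).lineMap
      (tendsto_const_nhds (x := f (r z))) (tendsto_one_div_add_atTop_nhds_zero_nat (𝕜 := ℝ))
  have hweak := hseq _ (hconv.segment_subset hzC hqC) (exists_finiteDimensional_segment_subset _ _)
    _ _ (fun n => (hr (hwC n)).1) hxK (fun n => by rw [(hr (hwC n)).2]; exact hwL n)
    (by simpa only [(hr (hwC _)).2, hgx] using hwz)
  exact ⟨r z, hxK, (eq_of_forall_inner_sub_nonneg hconv hzC hqC hz ht hwz hweak).trans hgx.symm⟩

theorem stmt13 {H : Type*} [NormedAddCommGroup H] [InnerProductSpace ℝ H] [CompleteSpace H]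
    (K : Set H) (hne : K.Nonempty) (f g : H → H)
    (hmono : ∀ x ∈ K, ∀ y ∈ K, ⟪f x - f y, g x - g y⟫ ≤ ‖g x - g y‖ ^ 2)
    (hfg : f '' K ⊆ g '' K)
    (hcomp : WeaklyCompact (g '' K)) (hconv : Convex ℝ (g '' K))
    (hseq : ∀ (L : Set H), L ⊆ g '' K →
      (∃ M : Submodule ℝ H, FiniteDimensional ℝ M ∧ L ⊆ (M : Set H)) →
      ∀ (u : ℕ → H) (x : H), (∀ n, u n ∈ K) → x ∈ K → (∀ n, g (u n) ∈ L) →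
        Filter.Tendsto (fun n => g (u n)) Filter.atTop (nhds (g x)) →
        WeakConv (fun n => f (u n)) (f x)) :
    ∃ x ∈ K, f x = g x :=
  stmt13_general K hne f g hmono hfg hcomp hconv hseq
end
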